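/- Let G = ⟨A * B; [H,K]=1⟩ with U = HK ≅ H × K. Suppose A is 𝓕_π-quasi-regular by H and B is 𝓕_π-quasi-regular by K. Then a subgroup of U is separable by the family Θ_π(HK) = {(X ∩ H)(Y ∩ K) : X ∈ Ω_π(A), Y ∈ Ω_π(B)} if and only if it is separable by Ω_π(HK), the family of normal subgroups of HK of finite π-index; consequently Λ_π(HK) = Δ_π(HK). -/

import Mathlib

open Pointwise

def IsPiNumber (π : Set ℕ) (n : ℕ) : Prop := n ≠ 0 ∧ ∀ p : ℕ, p.Prime → p ∣ n → p ∈ π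

def IsPiPrimeNumber (π : Set ℕ) (n : ℕ) : Prop := n ≠ 0 ∧ ∀ p : ℕ, p.Prime → p ∣ n → p ∉ π

/-- `N` is a normal subgroup of finite π-index, i.e. `N ∈ Ω_π(X)`. -/
def InOmega (π : Set ℕ) {X : Type*} [Group X] (N : Subgroup X) : Prop :=
  N.Normal ∧ IsPiNumber π N.index

/-- `Y` is separable by the family `F` of subgroups. -/
def SepBy {X : Type*} [Group X] (F : Set (Subgroup X)) (Y : Subgroup X) : Prop :=
  (⋂ N ∈ F, (Y : Set X) * (N : Set X)) = (Y : Set X)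

/-- `Y` is 𝓕_π-separable in `X`. -/
def SepIn (π : Set ℕ) {X : Type*} [Group X] (Y : Subgroup X) : Prop :=
  SepBy {N : Subgroup X | InOmega π N} Y

/-- `Y` is π'-isolated in `X`. -/
def Isolated (π : Set ℕ) {X : Type*} [Group X] (Y : Subgroup X) : Prop :=
  ∀ x : X, ∀ q : ℕ, IsPiPrimeNumber π q → x ^ q ∈ Y → x ∈ Y

/-- `X` is residually a finite π-group. -/
def ResiduallyPi (π : Set ℕ) (X : Type*) [Group X] : Prop :=
  ∀ x : X, x ≠ 1 → ∃ N : Subgroup X, InOmega π N ∧ x ∉ N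

/-! If `XA ∈ Ω_π(A)` and `YB ∈ Ω_π(B)`, then `(XA ∩ H) × (YB ∩ K)` lies in `Ω_π(H × K)`; conversely,
quasi-regularity gives, below the two coordinate slices `N ∩ H` and `N ∩ K` of any `N ∈ Ω_π(H × K)`,
traces of members of `Ω_π(A)` and `Ω_π(B)`, whose product then lies in `N`. So the families
`Θ_π(HK)` and `Ω_π(HK)` are mutually cofinal, hence separate the same subgroups. -/

lemma IsPiNumber.of_dvd {π : Set ℕ} {n d : ℕ} (hn : IsPiNumber π n) (h : d ∣ n) :
    IsPiNumber π d :=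
  ⟨fun hd => hn.1 (Nat.eq_zero_of_zero_dvd (hd ▸ h)),
   fun p hp hpd => hn.2 p hp (hpd.trans h)⟩

lemma IsPiNumber.mul {π : Set ℕ} {m n : ℕ} (hm : IsPiNumber π m) (hn : IsPiNumber π n) :
    IsPiNumber π (m * n) :=
  ⟨Nat.mul_ne_zero hm.1 hn.1, fun p hp hpd =>
    ((Nat.Prime.dvd_mul hp).mp hpd).elim (hm.2 p hp) (hn.2 p hp)⟩

section Omega

variable {π : Set ℕ} {X Y : Type*} [Group X] [Group Y]

lemma InOmega.comap {N : Subgroup X} (hN : InOmega π N) (f : Y →* X) :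
    InOmega π (N.comap f) := by
  have := hN.1
  refine ⟨hN.1.comap f, hN.2.of_dvd ?_⟩
  rw [Subgroup.index_comap]
  exact N.relIndex_dvd_index_of_normal f.range

lemma InOmega.prod {M : Subgroup X} {N : Subgroup Y} (hM : InOmega π M) (hN : InOmega π N) :
    InOmega π (M.prod N) := by
  have := hM.1
  have := hN.1
  exact ⟨Subgroup.prod_normal M N, by rw [Subgroup.index_prod]; exact hM.2.mul hN.2⟩

end Omega

lemma Subgroup.prod_comap_inl_comap_inr_le {X Y : Type*} [Group X] [Group Y]
    (N : Subgroup (X × Y)) :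
    (N.comap (MonoidHom.inl X Y)).prod (N.comap (MonoidHom.inr X Y)) ≤ N := by
  rintro ⟨x, y⟩ ⟨hx, hy⟩
  simpa using N.mul_mem hx hy

lemma SepBy.congr_of_cofinal {X : Type*} [Group X] {F G : Set (Subgroup X)}
    (hFG : ∀ Q ∈ F, ∃ N ∈ G, N ≤ Q) (hGF : ∀ N ∈ G, ∃ Q ∈ F, Q ≤ N) (C : Subgroup X) :
    SepBy F C ↔ SepBy G C := by
  have cofinal_subset {F G : Set (Subgroup X)} (h : ∀ Q ∈ F, ∃ N ∈ G, N ≤ Q) :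
      (⋂ N ∈ G, (C : Set X) * (N : Set X)) ⊆ ⋂ Q ∈ F, (C : Set X) * (Q : Set X) := by
    refine Set.subset_iInter₂ fun Q hQ => ?_
    obtain ⟨N, hN, hNQ⟩ := h Q hQ
    exact (Set.biInter_subset_of_mem hN).trans (Set.mul_subset_mul_left hNQ)
  unfold SepBy
  rw [(cofinal_subset hGF).antisymm (cofinal_subset hFG)]

/-- The family `Θ_π(HK)`, with `HK` identified with `H × K`. -/
def thetaFamily (π : Set ℕ) {A B : Type*} [Group A] [Group B] (H : Subgroup A)
    (K : Subgroup B) : Set (Subgroup (H × K)) :=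
  {Q | ∃ (XA : Subgroup A) (YB : Subgroup B),
    InOmega π XA ∧ InOmega π YB ∧ Q = (XA.subgroupOf H).prod (YB.subgroupOf K)}

/-- If `A` is 𝓕_π-quasi-regular by `H` and `B` is 𝓕_π-quasi-regular by `K`, then a
subgroup of `HK ≅ H × K` is separable by `Θ_π(HK)` iff it is separable by
`Ω_π(HK)`; consequently `Λ_π(HK) = Δ_π(HK)`. -/
theorem theta_sep_iff_omega_sep (π : Set ℕ) {A B : Type*} [Group A] [Group B]
    (H : Subgroup A) (K : Subgroup B)
    (hA : ∀ M : Subgroup ↥H, M.Normal → IsPiNumber π M.index →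
      ∃ N : Subgroup A, InOmega π N ∧ N.subgroupOf H ≤ M)
    (hB : ∀ M : Subgroup ↥K, M.Normal → IsPiNumber π M.index →
      ∃ N : Subgroup B, InOmega π N ∧ N.subgroupOf K ≤ M) :
    (∀ C : Subgroup (↥H × ↥K),
      SepBy {Q : Subgroup (↥H × ↥K) | ∃ (XA : Subgroup A) (YB : Subgroup B),
          InOmega π XA ∧ InOmega π YB ∧ Q = (XA.subgroupOf H).prod (YB.subgroupOf K)} C ↔
      SepIn π C) ∧
    {C : Subgroup (↥H × ↥K) | (∃ g, C = Subgroup.zpowers g) ∧ Isolated π C ∧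
        ¬ SepBy {Q : Subgroup (↥H × ↥K) | ∃ (XA : Subgroup A) (YB : Subgroup B),
            InOmega π XA ∧ InOmega π YB ∧ Q = (XA.subgroupOf H).prod (YB.subgroupOf K)} C} =
    {C : Subgroup (↥H × ↥K) | (∃ g, C = Subgroup.zpowers g) ∧ Isolated π C ∧
        ¬ SepIn π C} := by
  have sep_iff (C : Subgroup (H × K)) : SepBy (thetaFamily π H K) C ↔ SepIn π C := by
    refine SepBy.congr_of_cofinal ?_ ?_ C
    · rintro Q ⟨XA, YB, hXA, hYB, rfl⟩
      exact ⟨_, (hXA.comap H.subtype).prod (hYB.comap K.subtype), le_rfl⟩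
    · intro N hN
      obtain ⟨XA, hXA, hXAle⟩ := hA _ (hN.comap (MonoidHom.inl H K)).1
        (hN.comap (MonoidHom.inl H K)).2
      obtain ⟨YB, hYB, hYBle⟩ := hB _ (hN.comap (MonoidHom.inr H K)).1
        (hN.comap (MonoidHom.inr H K)).2
      exact ⟨_, ⟨XA, YB, hXA, hYB, rfl⟩,
        (Subgroup.prod_mono hXAle hYBle).trans N.prod_comap_inl_comap_inr_le⟩
  exact ⟨sep_iff, Set.ext fun C => and_congr_right' (and_congr_right' (sep_iff C).not)⟩
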